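/- arXiv:1502.05077 — 8 statements merged into one kernel-verified Lean document; each statement's English description precedes it below -/
import Mathlib

section
/- For every natural number b ≥ 1, the polynomial f_b(t) = 2·(t^{2b} + t^{2b-1} + ... + t + 1) + t^b has all of its complex roots on the unit circle. -/
open Polynomial

/-!
Multiplying `f_b(z)` by `z - 1` turns a root `z` into a solution of
`z ^ (b + 1) * (2 * w + 1) = 2 + w` with `w = z ^ b`. Since
`‖2 * w + 1‖² - ‖2 + w‖² = 3 (‖w‖² - 1)`, for `‖z‖ < 1` the factor `2 * w + 1`
is at most as long as `2 + w` while multiplication by `z ^ (b + 1)` strictly shrinks it,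
and for `‖z‖ > 1` the reverse happens; so `‖z‖ = 1`.
-/

lemma norm_two_mul_add_one_sq_sub_norm_two_add_sq (w : ℂ) :
    ‖2 * w + 1‖ ^ 2 - ‖2 + w‖ ^ 2 = 3 * (‖w‖ ^ 2 - 1) := by
  simp only [Complex.sq_norm, Complex.normSq_apply, Complex.add_re, Complex.add_im,
    Complex.mul_re, Complex.mul_im, Complex.one_re, Complex.one_im,
    Complex.re_ofNat, Complex.im_ofNat]
  ring

lemma norm_two_mul_add_one_le_norm_two_add {w : ℂ} (hw : ‖w‖ ≤ 1) :
    ‖2 * w + 1‖ ≤ ‖2 + w‖ := by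
  have h := norm_two_mul_add_one_sq_sub_norm_two_add_sq w
  refine (sq_le_sq₀ (norm_nonneg _) (norm_nonneg _)).mp ?_
  nlinarith [norm_nonneg w]

lemma norm_two_add_le_norm_two_mul_add_one {w : ℂ} (hw : 1 ≤ ‖w‖) :
    ‖2 + w‖ ≤ ‖2 * w + 1‖ := by
  have h := norm_two_mul_add_one_sq_sub_norm_two_add_sq w
  refine (sq_le_sq₀ (norm_nonneg _) (norm_nonneg _)).mp ?_
  nlinarith

lemma norm_eq_one_of_pow_succ_mul_eq (b : ℕ) {z : ℂ}
    (h : z ^ (b + 1) * (2 * z ^ b + 1) = 2 + z ^ b) : ‖z‖ = 1 := by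
  have hA : 0 < ‖2 * z ^ b + 1‖ := by
    refine norm_pos_iff.mpr fun h0 => ?_
    have hw : z ^ b = -2 := by linear_combination -h + z ^ (b + 1) * h0
    have : (-3 : ℂ) = 0 := by rw [← h0, hw]; norm_num
    norm_num at this
  have hnorm : ‖z‖ ^ (b + 1) * ‖2 * z ^ b + 1‖ = ‖2 + z ^ b‖ := by
    rw [← norm_pow, ← norm_mul, h]
  rcases lt_trichotomy ‖z‖ 1 with hlt | heq | hgt
  · have hle : ‖2 * z ^ b + 1‖ ≤ ‖2 + z ^ b‖ :=
      norm_two_mul_add_one_le_norm_two_add <| by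
        rw [norm_pow]; exact pow_le_one₀ (norm_nonneg z) hlt.le
    have hshrink : ‖z‖ ^ (b + 1) < 1 := pow_lt_one₀ (norm_nonneg z) hlt (Nat.succ_ne_zero b)
    nlinarith
  · exact heq
  · have hle : ‖2 + z ^ b‖ ≤ ‖2 * z ^ b + 1‖ :=
      norm_two_add_le_norm_two_mul_add_one (by rw [norm_pow]; exact one_le_pow₀ hgt.le)
    have hgrow : 1 < ‖z‖ ^ (b + 1) := one_lt_pow₀ hgt (Nat.succ_ne_zero b)
    nlinarith

theorem stmt_0_general (b : ℕ) (z : ℂ)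
    (hz : (2 * ∑ i ∈ Finset.range (2 * b + 1), (X : ℂ[X]) ^ i + X ^ b).IsRoot z) :
    ‖z‖ = 1 := by
  have hroot : 2 * ∑ i ∈ Finset.range (2 * b + 1), z ^ i + z ^ b = 0 := by
    simpa [IsRoot, eval_finsetSum] using hz
  refine norm_eq_one_of_pow_succ_mul_eq b ?_
  linear_combination (z - 1) * hroot - 2 * geom_sum_mul z (2 * b + 1)

/-- For every `b ≥ 1`, the polynomial `f_b(t) = 2·∑_{i=0}^{2b} t^i + t^b`
has all of its complex roots on the unit circle. -/
theorem stmt_0 (b : ℕ) (hb : 1 ≤ b) (z : ℂ)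
    (hz : (2 * ∑ i ∈ Finset.range (2 * b + 1), (X : ℂ[X]) ^ i + X ^ b).IsRoot z) :
    ‖z‖ = 1 :=
  stmt_0_general b z hz
end

section
/- For every natural number b ≥ 1, the polynomial f_b(t) = 2·∑_{i=0}^{2b} t^i + t^b is irreducible over ℚ. -/
/-!
Write `f_b = g * h` over `ℤ` (Gauss's lemma reduces irreducibility over `ℚ` to this, `f_b` being
primitive). Every complex root of `f_b` lies on the unit circle, so every factor `g` satisfies
`|g(0)| = |lc g|`. Modulo 2, `f_b ≡ X^b`; since `g(0) h(0) = 2`, one factor, say `g`, has odd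
constant term, so its reduction is a unit, i.e. of degree 0. But `lc g` is odd as well, so the
reduction keeps the degree of `g`, which must therefore be `0`.
-/

open Polynomial

noncomputable def fb (R : Type*) [Semiring R] (b : ℕ) : R[X] :=
  2 * ∑ i ∈ Finset.range (2 * b + 1), X ^ i + X ^ b

section fb

variable {R S : Type*} [Semiring R] [Semiring S] {b : ℕ}

@[simp]
lemma map_fb (f : R →+* S) : (fb R b).map f = fb S b := by
  simp [fb, Polynomial.map_sum]

lemma coeff_fb {n : ℕ} (hn : n ≤ 2 * b) : (fb R b).coeff n = 2 + if n = b then 1 else 0 := by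
  simp [fb, coeff_X_pow, Nat.lt_succ_of_le hn, eq_comm]

lemma eval_fb {R : Type*} [CommSemiring R] (x : R) :
    (fb R b).eval x = 2 * ∑ i ∈ Finset.range (2 * b + 1), x ^ i + x ^ b := by
  simp [fb, eval_finsetSum]

lemma fb_eq_X_pow_of_charTwo [CharP R 2] : fb R b = X ^ b := by
  simp [fb, CharTwo.two_eq_zero]

end fb

lemma Complex.norm_add_two_sq (w : ℂ) :
    ‖w + 2‖ ^ 2 = ‖2 * w + 1‖ ^ 2 + 3 * (1 - ‖w‖ ^ 2) := by
  simp only [Complex.sq_norm, Complex.normSq_apply, Complex.add_re, Complex.add_im,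
    Complex.mul_re, Complex.mul_im, Complex.re_ofNat, Complex.im_ofNat, Complex.one_re,
    Complex.one_im]
  ring

lemma Complex.norm_two_mul_add_one_lt {w : ℂ} (hw : ‖w‖ < 1) : ‖2 * w + 1‖ < ‖w + 2‖ :=
  lt_of_pow_lt_pow_left₀ 2 (norm_nonneg _) <| by nlinarith [norm_add_two_sq w, norm_nonneg w]

lemma Complex.norm_add_two_lt {w : ℂ} (hw : 1 < ‖w‖) : ‖w + 2‖ < ‖2 * w + 1‖ :=
  lt_of_pow_lt_pow_left₀ 2 (norm_nonneg _) <| by nlinarith [norm_add_two_sq w]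

lemma norm_eq_one_of_eval_fb_eq_zero {b : ℕ} (hb : b ≠ 0) {z : ℂ} (hz : (fb ℂ b).eval z = 0) :
    ‖z‖ = 1 := by
  set w := z ^ b
  -- `(z - 1) f_b(z) = 2 z^(2b+1) + z^(b+1) - z^b - 2`
  have key : z * w * (2 * w + 1) = w + 2 := by
    rw [eval_fb] at hz
    linear_combination (z - 1) * hz - 2 * geom_sum_mul z (2 * b + 1)
  have hnorm : ‖z‖ * ‖w‖ * ‖2 * w + 1‖ = ‖w + 2‖ := by simp only [← norm_mul, key]
  rcases lt_trichotomy ‖z‖ 1 with h | h | h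
  · have hw : ‖w‖ < 1 := by simpa [w] using pow_lt_one₀ (norm_nonneg z) h hb
    have : ‖z‖ * ‖w‖ * ‖2 * w + 1‖ ≤ ‖2 * w + 1‖ :=
      mul_le_of_le_one_left (norm_nonneg _) (mul_le_one₀ h.le (norm_nonneg w) hw.le)
    linarith [Complex.norm_two_mul_add_one_lt hw]
  · exact h
  · have hw : 1 < ‖w‖ := by simpa [w] using one_lt_pow₀ h hb
    have : ‖2 * w + 1‖ ≤ ‖z‖ * ‖w‖ * ‖2 * w + 1‖ :=
      le_mul_of_one_le_left (norm_nonneg _) (one_le_mul_of_one_le_of_one_le h.le hw.le)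
    linarith [Complex.norm_add_two_lt hw]

lemma Complex.norm_coeff_zero_eq_norm_leadingCoeff {p : ℂ[X]} (hp : ∀ z ∈ p.roots, ‖z‖ = 1) :
    ‖p.coeff 0‖ = ‖p.leadingCoeff‖ := by
  have hprod : ‖p.roots.prod‖ = 1 :=
    Multiset.prod_induction (‖·‖ = 1) _ (fun x y hx hy => by simp [hx, hy]) (by simp) hp
  rw [(IsAlgClosed.splits p).coeff_zero_eq_leadingCoeff_mul_prod_roots]
  simp [hprod]

lemma Polynomial.IsPrimitive.irreducible_of_forall_natDegree_eq_zero {R : Type*} [CommSemiring R]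
    [NoZeroDivisors R] {p : R[X]} (hp : p.IsPrimitive) (hdeg : p.natDegree ≠ 0)
    (h : ∀ q r, p = q * r → q.natDegree = 0 ∨ r.natDegree = 0) : Irreducible p := by
  have isUnit_of_dvd {q : R[X]} (hq : q ∣ p) (h0 : q.natDegree = 0) : IsUnit q := by
    rw [eq_C_of_natDegree_eq_zero h0] at hq ⊢
    exact isUnit_C.mpr (hp _ hq)
  refine ⟨fun hu => hdeg (natDegree_eq_zero_of_isUnit hu), fun q r hqr => ?_⟩
  exact (h q r hqr).imp (isUnit_of_dvd (Dvd.intro _ hqr.symm))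
    (isUnit_of_dvd (Dvd.intro_left _ hqr.symm))

lemma Polynomial.isUnit_of_dvd_X_pow {R : Type*} [CommRing R] [IsDomain R] {g : R[X]} {n : ℕ}
    (hg : g ∣ X ^ n) (h0 : g.coeff 0 ≠ 0) : IsUnit g := by
  obtain ⟨i, -, hi⟩ := (dvd_prime_pow prime_X n).mp hg
  rcases i with _ | i
  · simpa using hi
  · exact absurd (X_dvd_iff.mp ((dvd_pow_self X i.succ_ne_zero).trans hi.symm.dvd)) h0

section fbInt

variable {b : ℕ}

lemma isPrimitive_fb (hb : b ≠ 0) : (fb ℤ b).IsPrimitive := by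
  intro r hr
  rw [C_dvd_iff_dvd_coeff] at hr
  have h2 := hr 0
  have h3 := hr b
  rw [coeff_fb (Nat.zero_le _), if_neg (Ne.symm hb)] at h2
  rw [coeff_fb (by omega), if_pos rfl] at h3
  exact isUnit_of_dvd_one (by simpa using dvd_sub h3 h2)

lemma natDegree_fb_ne_zero (hb : b ≠ 0) : (fb ℤ b).natDegree ≠ 0 := by
  refine ((Nat.pos_of_ne_zero hb).trans_le (le_natDegree_of_ne_zero ?_)).ne'
  rw [coeff_fb (by omega), if_pos rfl]
  norm_num

lemma abs_coeff_zero_eq_abs_leadingCoeff_of_dvd_fb (hb : b ≠ 0) {g : ℤ[X]} (hg : g ∣ fb ℤ b) :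
    |g.coeff 0| = |g.leadingCoeff| := by
  have hgC : g.map (Int.castRingHom ℂ) ∣ fb ℂ b := by simpa using map_dvd (Int.castRingHom ℂ) hg
  have := Complex.norm_coeff_zero_eq_norm_leadingCoeff fun z hz =>
    norm_eq_one_of_eval_fb_eq_zero hb (eval_eq_zero_of_dvd_of_eval_eq_zero hgC (mem_roots'.mp hz).2)
  rw [coeff_map, leadingCoeff_map_of_injective (RingHom.injective_int _), eq_intCast, eq_intCast,
    Complex.norm_intCast, Complex.norm_intCast] at this
  exact_mod_cast this

lemma natDegree_eq_zero_of_dvd_fb (hb : b ≠ 0) {g : ℤ[X]} (hg : g ∣ fb ℤ b)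
    (hodd : Odd (g.coeff 0)) : g.natDegree = 0 := by
  have hdvd : g.map (Int.castRingHom (ZMod 2)) ∣ X ^ b := by
    simpa [fb_eq_X_pow_of_charTwo] using map_dvd (Int.castRingHom (ZMod 2)) hg
  have hodd_lc : Odd g.leadingCoeff := by
    rwa [← odd_abs, ← abs_coeff_zero_eq_abs_leadingCoeff_of_dvd_fb hb hg, odd_abs]
  have h0 : (g.map (Int.castRingHom (ZMod 2))).coeff 0 ≠ 0 := by
    simpa [ZMod.intCast_eq_zero_iff_even] using hodd
  have hlc : Int.castRingHom (ZMod 2) g.leadingCoeff ≠ 0 := by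
    simpa [ZMod.intCast_eq_zero_iff_even] using hodd_lc
  rw [← natDegree_map_of_leadingCoeff_ne_zero _ hlc]
  exact natDegree_eq_zero_of_isUnit (isUnit_of_dvd_X_pow hdvd h0)

lemma irreducible_fb_int (hb : b ≠ 0) : Irreducible (fb ℤ b) := by
  refine (isPrimitive_fb hb).irreducible_of_forall_natDegree_eq_zero (natDegree_fb_ne_zero hb)
    fun g h hgh => ?_
  have h2 : g.coeff 0 * h.coeff 0 = 2 := by
    rw [← mul_coeff_zero, ← hgh, coeff_fb (Nat.zero_le _), if_neg (Ne.symm hb), add_zero]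
  have hodd : Odd (g.coeff 0) ∨ Odd (h.coeff 0) := by
    by_contra! hev
    simp only [Int.not_odd_iff_even, even_iff_two_dvd] at hev
    have := mul_dvd_mul hev.1 hev.2
    rw [h2] at this
    norm_num at this
  exact hodd.imp (natDegree_eq_zero_of_dvd_fb hb (Dvd.intro _ hgh.symm))
    (natDegree_eq_zero_of_dvd_fb hb (Dvd.intro_left _ hgh.symm))

end fbInt

/-- For every `b ≥ 1`, the polynomial `f_b(t) = 2·∑_{i=0}^{2b} t^i + t^b`
is irreducible over `ℚ`. -/
theorem stmt_1 (b : ℕ) (hb : 1 ≤ b) :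
    Irreducible (2 * ∑ i ∈ Finset.range (2 * b + 1), (X : ℚ[X]) ^ i + X ^ b) := by
  have hb0 : b ≠ 0 := Nat.one_le_iff_ne_zero.mp hb
  change Irreducible (fb ℚ b)
  rw [← map_fb (Int.castRingHom ℚ)]
  exact (IsPrimitive.Int.irreducible_iff_irreducible_map_cast (isPrimitive_fb hb0)).mp
    (irreducible_fb_int hb0)
end

section
/- If g(t) ∈ ℂ[t] is a nonzero polynomial and α is a root of g with |α| = 1, then the polynomial t^{deg g}·g(t)·\overline{g}(1/t) (where \overline{g} denotes the polynomial with complex-conjugated coefficients) has α as a root of even multiplicity. Consequently, any polynomial in ℂ[t] having a unit-norm root of odd multiplicity cannot be written as λ·t^k·g(t)·\overline{g}(1/t) for λ ∈ ℂ, k ∈ ℤ, g ∈ ℂ[t]. -/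
/-!
Reversal sends a root `β ≠ 0` of multiplicity `m` to a root `β⁻¹` of multiplicity `m`,
and conjugating the coefficients sends it to `conj β`. On the unit circle `conj β = β⁻¹`,
so `β` is a root of `(map conj g).reverse` exactly as often as of `g`, and its multiplicity
in the product doubles. A norm `λ·t^k·g(t)·conj(g)(1/t)` differs from
`C λ * g * (map conj g).reverse` only by a power of `T`, which does not change
multiplicities of nonzero roots.
-/

open Polynomial LaurentPolynomial

section General

variable {R : Type*}

lemma Polynomial.reverse_X_sub_C [Ring R] (c : R) : (X - C c).reverse = 1 - C c * X := by
  nontriviality R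
  have hX : (X : R[X]).reverse = 1 := by
    have h := reverse_mul_X (1 : R[X])
    rwa [one_mul, ← C_1, reverse_C, C_1] at h
  rw [sub_eq_add_neg, ← C_neg, reverse_add_C, hX, natDegree_X, pow_one, C_neg, neg_mul,
    ← sub_eq_add_neg]

lemma Polynomial.reverse_pow_of_domain [Semiring R] [NoZeroDivisors R] (p : R[X]) (n : ℕ) :
    (p ^ n).reverse = p.reverse ^ n := by
  induction n with
  | zero => rw [pow_zero, pow_zero, ← C_1, reverse_C]
  | succ n ih => rw [pow_succ, reverse_mul_of_domain, ih, pow_succ]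

lemma Polynomial.rootMultiplicity_mul_of_not_isRoot [CommRing R] [IsDomain R]
    {q : R[X]} {β : R} (hq : ¬ q.IsRoot β) (p : R[X]) :
    (q * p).rootMultiplicity β = p.rootMultiplicity β := by
  rcases eq_or_ne p 0 with rfl | hp
  · simp
  have hq0 : q ≠ 0 := by rintro rfl; exact hq (by simp)
  rw [rootMultiplicity_mul (mul_ne_zero hq0 hp), rootMultiplicity_eq_zero hq, zero_add]

lemma Polynomial.rootMultiplicity_reverse {K : Type*} [Field K] (q : K[X]) {β : K}
    (hβ : β ≠ 0) :
    q.reverse.rootMultiplicity β = q.rootMultiplicity β⁻¹ := by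
  rcases eq_or_ne q 0 with rfl | hq
  · simp
  obtain ⟨s, hqs, hs⟩ := q.exists_eq_pow_rootMultiplicity_mul_and_not_dvd hq β⁻¹
  set r := q.rootMultiplicity β⁻¹
  have hs_rev : ¬ s.reverse.IsRoot β := by
    have : Invertible β⁻¹ := invertibleOfNonzero (inv_ne_zero hβ)
    have := eval₂_reverse_eq_zero_iff (RingHom.id K) β⁻¹ s
    rw [invOf_eq_inv, inv_inv] at this
    rwa [IsRoot, eval, this, ← eval, ← IsRoot, ← dvd_iff_isRoot]
  have hlin : 1 - C β⁻¹ * X = C (-β⁻¹) * (X - C β) := by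
    rw [mul_sub, ← C_mul, neg_mul, inv_mul_cancel₀ hβ, C_neg, C_neg, C_1]; ring
  have hrev : q.reverse = (X - C β) ^ r * (C (-β⁻¹) ^ r * s.reverse) := by
    rw [hqs, reverse_mul_of_domain, reverse_pow_of_domain, reverse_X_sub_C, hlin, mul_pow]; ring
  have hunit : ¬ (C (-β⁻¹) ^ r : K[X]).IsRoot β := by simp [IsRoot, hβ]
  rw [hrev, mul_comm, rootMultiplicity_mul_X_sub_C_pow,
    rootMultiplicity_mul_of_not_isRoot hunit, rootMultiplicity_eq_zero hs_rev, zero_add]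
  refine mul_ne_zero (pow_ne_zero _ (by simpa using hβ)) ?_
  rw [Ne, reverse_eq_zero]
  rintro rfl
  exact hs (dvd_zero _)

lemma LaurentPolynomial.invert_toLaurent [CommSemiring R] (p : R[X]) :
    invert p.toLaurent = T (-p.natDegree) * p.reverse.toLaurent := by
  rw [toLaurent_reverse, mul_comm, mul_assoc, ← T_add, add_neg_cancel, T_zero, mul_one]

lemma Polynomial.rootMultiplicity_eq_of_toLaurent_eq_T_mul [CommRing R] [IsDomain R]
    {p r : R[X]} {m : ℤ} (h : p.toLaurent = T m * r.toLaurent) {β : R} (hβ : β ≠ 0) :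
    p.rootMultiplicity β = r.rootMultiplicity β := by
  have hX : ∀ n : ℕ, ¬ (X ^ n : R[X]).IsRoot β := fun n => by simp [IsRoot, hβ]
  have hpr : X ^ (-m).toNat * p = X ^ m.toNat * r := by
    apply toLaurent_injective
    rw [map_mul, map_mul, toLaurent_X_pow, toLaurent_X_pow, h, ← mul_assoc, ← T_add]
    congr 2
    omega
  rw [← rootMultiplicity_mul_of_not_isRoot (hX (-m).toNat), hpr,
    rootMultiplicity_mul_of_not_isRoot (hX m.toNat)]

end General

lemma Polynomial.rootMultiplicity_mul_reverse_map_conj (h : ℂ[X]) {β : ℂ}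
    (hβ : ‖β‖ = 1) :
    (h * (h.map (starRingEnd ℂ)).reverse).rootMultiplicity β = 2 * h.rootMultiplicity β := by
  rcases eq_or_ne h 0 with rfl | hh
  · simp
  have hβ0 : β ≠ 0 := norm_ne_zero_iff.mp (by simp [hβ])
  have hrev : (h.map (starRingEnd ℂ)).reverse ≠ 0 := by
    rwa [Ne, reverse_eq_zero, Polynomial.map_eq_zero_iff (starRingEnd ℂ).injective]
  rw [rootMultiplicity_mul (mul_ne_zero hh hrev), rootMultiplicity_reverse _ hβ0,
    Complex.inv_eq_conj hβ, ← eq_rootMultiplicity_map (starRingEnd ℂ).injective, two_mul]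

theorem stmt_3_general (g : ℂ[X]) (α : ℂ) (hα : ‖α‖ = 1) :
    Even ((g * (g.map (starRingEnd ℂ)).reverse).rootMultiplicity α) ∧
      ∀ p : ℂ[X], (∃ β : ℂ, ‖β‖ = 1 ∧ Odd (p.rootMultiplicity β)) →
        ¬ ∃ (lam : ℂ) (k : ℤ) (h : ℂ[X]),
          p.toLaurent = LaurentPolynomial.C lam * T k * h.toLaurent *
            invert (h.map (starRingEnd ℂ)).toLaurent := by
  refine ⟨rootMultiplicity_mul_reverse_map_conj g hα ▸ even_two_mul _, ?_⟩
  rintro p ⟨β, hβ, hodd⟩ ⟨lam, k, h, hp⟩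
  have hβ0 : β ≠ 0 := norm_ne_zero_iff.mp (by simp [hβ])
  have hpT : p.toLaurent = T (k - (h.map (starRingEnd ℂ)).natDegree) *
      (Polynomial.C lam * (h * (h.map (starRingEnd ℂ)).reverse)).toLaurent := by
    rw [hp, invert_toLaurent, map_mul, map_mul, toLaurent_C, sub_eq_add_neg, T_add]
    ring
  rw [rootMultiplicity_eq_of_toLaurent_eq_T_mul hpT hβ0] at hodd
  rcases eq_or_ne lam 0 with rfl | hlam
  · simp at hodd
  rw [rootMultiplicity_mul_of_not_isRoot (by simpa using hlam),
    rootMultiplicity_mul_reverse_map_conj h hβ] at hodd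
  exact Nat.not_even_iff_odd.mpr hodd (even_two_mul _)

/-- If `g ∈ ℂ[t]` is nonzero and `α` is a root of `g` with `|α| = 1`, then the
polynomial `t^{deg g}·g(t)·conj(g)(1/t)` (which equals `g * (g.map conj).reverse`)
has `α` as a root of even multiplicity.  Consequently, any polynomial in `ℂ[t]`
having a unit-norm root of odd multiplicity is not a norm
`λ·t^k·g(t)·conj(g)(1/t)` in `ℂ[t^{±1}]`. -/
theorem stmt_3 (g : ℂ[X]) (hg : g ≠ 0) (α : ℂ) (hα : ‖α‖ = 1)
    (hroot : g.IsRoot α) :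
    Even ((g * (g.map (starRingEnd ℂ)).reverse).rootMultiplicity α) ∧
      ∀ p : ℂ[X], (∃ β : ℂ, ‖β‖ = 1 ∧ Odd (p.rootMultiplicity β)) →
        ¬ ∃ (lam : ℂ) (k : ℤ) (h : ℂ[X]),
          p.toLaurent = LaurentPolynomial.C lam * T k * h.toLaurent *
            invert (h.map (starRingEnd ℂ)).toLaurent :=
  stmt_3_general g α hα
end

section
/- Let b ≥ 1 and write f_b(t) = 2·∑_{i=0}^{2b} t^i + t^b = t^b·l_b(t + 1/t) for the unique polynomial l_b ∈ ℤ[t] of degree b. Then l_b has leading coefficient 2, all intermediate coefficients even, and odd constant coefficient; consequently the reversed polynomial t^b·l_b(1/t) is irreducible over ℚ by Eisenstein's criterion at the prime 2. -/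
open Polynomial

/-- Write `f_b(t) = 2∑_{i=0}^{2b} t^i + t^b = t^b·l_b(t + 1/t)` with `l_b ∈ ℤ[t]`
of degree `b`.  Then `l_b` has leading coefficient `2`, all intermediate
coefficients even, odd constant coefficient, and the reversed polynomial
`t^b·l_b(1/t)` is irreducible over `ℚ` (by Eisenstein at the prime `2`). -/
theorem stmt_6 (b : ℕ) (hb : 1 ≤ b) (l : ℤ[X]) (hld : l.natDegree = b)
    (hrep : (2 * ∑ i ∈ Finset.range (2 * b + 1), (X : ℤ[X]) ^ i + X ^ b) =
      ∑ j ∈ Finset.range (b + 1), C (l.coeff j) * X ^ (b - j) * (X ^ 2 + 1) ^ j) :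
    l.coeff b = 2 ∧ (∀ j : ℕ, 0 < j → j < b → 2 ∣ l.coeff j) ∧ Odd (l.coeff 0) ∧
      Irreducible (l.reverse.map (algebraMap ℤ ℚ)) := by
  -- Step 1: leading coefficient is 2, by evaluating at 0
  have hcb : l.coeff b = 2 := by
    have h0 := congrArg (eval 0) hrep
    simp [eval_finset_sum, zero_pow_eq, Finset.sum_range_succ] at h0
    rw [Finset.sum_eq_zero (fun x hx => if_neg (by simp at hx; omega))] at h0
    simp [show ¬ b = 0 by omega, show 0 < b from hb] at h0
    linarith
  -- Step 2: constant coefficient is odd, by evaluating at 1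
  have hodd : Odd (l.coeff 0) := by
    have h1 := congrArg (eval 1) hrep
    simp [eval_finset_sum] at h1
    rw [Finset.sum_range_succ'] at h1
    have h2 : (2 : ℤ) ∣ ∑ i ∈ Finset.range b, l.coeff (i+1) * 2 ^ (i+1) :=
      Finset.dvd_sum fun i _ => Dvd.dvd.mul_left (dvd_pow_self 2 (Nat.succ_ne_zero i)) _
    obtain ⟨k, hk⟩ := h2
    rw [Int.odd_iff]
    simp [hk] at h1
    omega
  -- Step 3: intermediate coefficients are even, by downward induction on j
  have hmon : ∀ j : ℕ, ((X:ℤ[X]) ^ 2 + 1) ^ j |>.Monic := fun j => by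
    apply Monic.pow
    have : ((X:ℤ[X]) ^ 2 + 1) = X ^ 2 + C 1 := by norm_num
    rw [this]; exact monic_X_pow_add_C 1 (by norm_num)
  have hdeg : ∀ j : ℕ, (((X:ℤ[X]) ^ 2 + 1) ^ j).natDegree = 2 * j := fun j => by
    rw [natDegree_pow]
    have : ((X:ℤ[X]) ^ 2 + 1) = X ^ 2 + C 1 := by norm_num
    rw [this, natDegree_X_pow_add_C]; ring
  have key : ∀ k : ℕ, ∀ j : ℕ, 1 ≤ j → j ≤ b → b ≤ j + k → 2 ∣ l.coeff j := by
    intro k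
    induction k with
    | zero =>
      intro j h1 h2 h3
      have : j = b := by omega
      rw [this, hcb]
    | succ k ih =>
      intro j h1 h2 h3
      by_cases hjk : b ≤ j + k
      · exact ih j h1 h2 hjk
      have hc := congrArg (fun p => coeff p (b + j)) hrep
      simp only [finset_sum_coeff] at hc
      have hL : (2:ℤ) ∣ (2 * ∑ i ∈ Finset.range (2*b+1), (X:ℤ[X])^i + X^b).coeff (b+j) := by
        rw [coeff_add, coeff_X_pow, if_neg (by omega),
          show ((2:ℤ[X]) = C 2) by norm_num, coeff_C_mul]
        exact dvd_add (dvd_mul_right 2 _) (dvd_zero 2)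
      rw [hc] at hL
      have hjmem : j ∈ Finset.range (b+1) := Finset.mem_range.mpr (by omega)
      rw [← Finset.add_sum_erase _ _ hjmem] at hL
      have hterm : (C (l.coeff j) * X ^ (b - j) * ((X:ℤ[X]) ^ 2 + 1) ^ j).coeff (b + j)
          = l.coeff j := by
        rw [mul_assoc, coeff_C_mul, show b + j = 2 * j + (b - j) by omega,
          coeff_X_pow_mul, ← hdeg j, Monic.coeff_natDegree (hmon j), mul_one]
      rw [hterm] at hL
      have hrest : (2:ℤ) ∣ ∑ j' ∈ (Finset.range (b+1)).erase j,
          (C (l.coeff j') * X ^ (b - j') * ((X:ℤ[X]) ^ 2 + 1) ^ j').coeff (b + j) := by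
        apply Finset.dvd_sum
        intro j' hj'
        have hne : j' ≠ j := Finset.ne_of_mem_erase hj'
        have hj'b : j' ≤ b := by
          have := Finset.mem_of_mem_erase hj'
          simp at this; omega
        rcases lt_or_gt_of_ne hne with hlt | hgt
        · rw [coeff_eq_zero_of_natDegree_lt]
          · exact dvd_zero 2
          calc (C (l.coeff j') * X ^ (b - j') * ((X:ℤ[X]) ^ 2 + 1) ^ j').natDegree
              ≤ (C (l.coeff j') * X ^ (b - j')).natDegree
                + (((X:ℤ[X]) ^ 2 + 1) ^ j').natDegree := natDegree_mul_le
            _ ≤ (C (l.coeff j')).natDegree + ((X:ℤ[X]) ^ (b - j')).natDegree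
                + (((X:ℤ[X]) ^ 2 + 1) ^ j').natDegree := by
                  gcongr; exact natDegree_mul_le
            _ < b + j := by
                  rw [natDegree_C, natDegree_X_pow, hdeg j']; omega
        · have : 2 ∣ l.coeff j' := ih j' (by omega) hj'b (by omega)
          rw [mul_assoc, coeff_C_mul]
          exact this.mul_right _
      exact (dvd_add_left hrest).mp hL
  have hdvd : ∀ j : ℕ, 0 < j → j < b → 2 ∣ l.coeff j :=
    fun j h1 h2 => key b j h1 (by omega) (by omega)
  -- Step 4: Eisenstein's criterion at 2 for the reversed polynomial
  have h0ne : l.coeff 0 ≠ 0 := by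
    intro h; rw [h] at hodd; exact (Int.not_odd_iff_even.mpr Even.zero) hodd
  have hnot2 : ¬ (2:ℤ) ∣ l.coeff 0 := by
    rw [Int.odd_iff] at hodd; omega
  have hl0 : l ≠ 0 := fun h => h0ne (by simp [h])
  have htr : l.natTrailingDegree = 0 := natTrailingDegree_eq_zero.mpr (Or.inr h0ne)
  have hrb : l.reverse.natDegree = b := by rw [reverse_natDegree, htr, hld, Nat.sub_zero]
  have hrc : ∀ n : ℕ, n ≤ b → l.reverse.coeff n = l.coeff (b - n) := by
    intro n hn
    rw [coeff_reverse, hld, revAt_le hn]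
  have hr0 : l.reverse ≠ 0 := fun h => by
    have := hrc b le_rfl
    rw [h] at this; simp at this; exact h0ne this.symm
  have hprim : l.reverse.IsPrimitive := by
    intro r hr
    have hdc : ∀ n, r ∣ l.reverse.coeff n := fun n => (C_dvd_iff_dvd_coeff r l.reverse).mp hr n
    have h2 : r ∣ 2 := by have := hdc 0; rwa [hrc 0 (by omega), Nat.sub_zero, hcb] at this
    have hodd' : r ∣ l.coeff 0 := by have := hdc b; rwa [hrc b le_rfl, Nat.sub_self] at this
    have h1 : r.natAbs ∣ 2 := by
      have := Int.natAbs_dvd_natAbs.mpr h2; simpa using this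
    rcases (Nat.dvd_prime Nat.prime_two).mp h1 with h | h
    · exact Int.isUnit_iff_natAbs_eq.mpr h
    · exfalso
      apply hnot2
      have h2r : ((r.natAbs : ℤ)) ∣ r := Int.natAbs_dvd.mpr dvd_rfl
      rw [h] at h2r
      exact (by exact_mod_cast h2r : (2:ℤ) ∣ r).trans hodd'
  have hirr : Irreducible l.reverse := by
    apply irreducible_of_eisenstein_criterion
      (P := Ideal.span {(2:ℤ)})
      ((Ideal.span_singleton_prime (by norm_num)).mpr Int.prime_two)
    · rw [leadingCoeff, hrb, hrc b le_rfl, Nat.sub_self, Ideal.mem_span_singleton]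
      exact hnot2
    · intro n hn
      have hnb : n < b := by
        rwa [degree_eq_natDegree hr0, hrb, Nat.cast_lt] at hn
      rw [hrc n (by omega), Ideal.mem_span_singleton]
      rcases Nat.eq_zero_or_pos n with rfl | hnpos
      · rw [Nat.sub_zero, hcb]
      · exact hdvd (b - n) (by omega) (by omega)
    · rw [← natDegree_pos_iff_degree_pos, hrb]; omega
    · rw [hrc 0 (by omega), Nat.sub_zero, hcb, Ideal.span_singleton_pow,
        Ideal.mem_span_singleton]
      norm_num
    · exact hprim
  refine ⟨hcb, hdvd, hodd, ?_⟩
  rw [algebraMap_int_eq]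
  exact (IsPrimitive.Int.irreducible_iff_irreducible_map_cast hprim).mp hirr
end

section
/- Let p be prime and let x, y be the p×p matrices over ℚ[t^{±1}] where x is the companion-type matrix with 1's on the superdiagonal and t in position (p,1), and y = a·x·a where a is the diagonal matrix with entries -1, -1, 1, ..., 1. Then (x·a)^p = t·I_p, and consequently (x·y)^{(p-1)/2}·x = y·(x·y)^{(p-1)/2}. -/
open Polynomial Matrix

/-- The `p×p` companion-type matrix with `1`'s on the superdiagonal and `t` in
position `(p,1)`. -/
noncomputable def xMat (p : ℕ) : Matrix (Fin p) (Fin p) ℚ[X] :=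
  Matrix.of fun i j => if (i : ℕ) + 1 = (j : ℕ) then 1
    else if (i : ℕ) = p - 1 ∧ (j : ℕ) = 0 then X else 0

/-- The diagonal matrix `diag(-1, -1, 1, …, 1)`. -/
noncomputable def aMat (p : ℕ) : Matrix (Fin p) (Fin p) ℚ[X] :=
  Matrix.of fun i j => if i = j then (if (i : ℕ) < 2 then -1 else 1) else 0

/-!
`x·a` is a weighted cyclic shift of `Fin p`, with weights `-t, -1, 1, …, 1`, so its `p`-th power
is the product of the weights, `t`, times the identity. Since `a² = 1` we have `x·y = (x·a)²`, so
for `p = 2k + 1` the two sides of the braid relation are `(x·a)^p·a` and `a·(x·a)^p`, which agree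
because `(x·a)^p` is scalar. For `p = 2`, `a = -1` is itself central.
-/

open Fin.CommRing

section WeightedCyclicShift

variable {R : Type*} [CommSemiring R] {n : ℕ} [NeZero n]

def weightedCyclicShift (c : Fin n → R) : Matrix (Fin n) (Fin n) R :=
  of fun i j => if j = i + 1 then c j else 0

theorem weightedCyclicShift_pow (c : Fin n → R) (k : ℕ) :
    weightedCyclicShift c ^ k =
      of fun i j : Fin n => if j = i + k then ∏ m ∈ Finset.range k, c (i + 1 + (m : Fin n))
        else 0 := by
  induction k with
  | zero =>
    ext i j
    simp [one_apply, eq_comm]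
  | succ k ih =>
    ext i j
    rw [pow_succ, ih, mul_apply, Finset.sum_eq_single (i + k)]
    · simp only [weightedCyclicShift, of_apply, if_true, Nat.cast_succ, ← add_assoc,
        Finset.prod_range_succ]
      split_ifs with h
      · rw [h, add_right_comm i 1]
      · simp
    · intro b _ hb
      rw [of_apply, if_neg hb, zero_mul]
    · exact fun h => (h (Finset.mem_univ _)).elim

theorem weightedCyclicShift_pow_self (c : Fin n → R) :
    weightedCyclicShift c ^ n = (∏ j, c j) • (1 : Matrix (Fin n) (Fin n) R) := by
  ext i j
  have hprod : ∏ m ∈ Finset.range n, c (i + 1 + m) = ∏ j, c j := by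
    rw [← Fin.prod_univ_eq_prod_range (fun m => c (i + 1 + m))]
    simp only [Fin.cast_val_eq_self]
    exact Equiv.prod_comp (Equiv.addLeft (i + 1)) c
  simp [weightedCyclicShift_pow, hprod, one_apply, eq_comm]

theorem weightedCyclicShift_mul_diagonal (c d : Fin n → R) :
    weightedCyclicShift c * diagonal d = weightedCyclicShift (c * d) := by
  ext i j
  simp only [weightedCyclicShift, mul_diagonal, of_apply, Pi.mul_apply, ite_mul, zero_mul]

end WeightedCyclicShift

theorem mul_conj_pow_mul_eq_conj_mul_pow {M : Type*} [Monoid M] {a x : M} (ha : a * a = 1) (k : ℕ)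
    (hcomm : Commute a ((x * a) ^ (2 * k + 1))) :
    (x * (a * x * a)) ^ k * x = a * x * a * (x * (a * x * a)) ^ k := by
  have hsq : x * (a * x * a) = (x * a) ^ 2 := by simp only [sq, mul_assoc]
  calc (x * (a * x * a)) ^ k * x = (x * a) ^ (2 * k + 1) * a := by
        rw [hsq, ← pow_mul, pow_succ, mul_assoc, mul_assoc, ha, mul_one]
    _ = a * (x * a) ^ (2 * k + 1) := hcomm.eq.symm
    _ = a * x * a * (x * (a * x * a)) ^ k := by
        rw [hsq, ← pow_mul, pow_succ', mul_assoc, mul_assoc, mul_assoc]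

theorem xMat_eq_weightedCyclicShift (p : ℕ) [NeZero p] :
    xMat p = weightedCyclicShift fun j => if j = 0 then X else 1 := by
  ext i j : 1
  simp only [xMat, weightedCyclicShift, of_apply, Fin.ext_iff, Fin.val_add, Fin.val_one',
    Nat.add_mod_mod, Fin.val_zero]
  rcases Nat.lt_or_ge ((i : ℕ) + 1) p with h | h
  · rw [Nat.mod_eq_of_lt h]
    split_ifs <;> first | rfl | omega
  · rw [show (i : ℕ) + 1 = p by omega, Nat.mod_self]
    split_ifs <;> first | rfl | omega

theorem aMat_eq_diagonal (p : ℕ) :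
    aMat p = diagonal fun i : Fin p => if (i : ℕ) < 2 then -1 else 1 :=
  rfl

theorem aMat_mul_self (p : ℕ) : aMat p * aMat p = 1 := by
  rw [aMat_eq_diagonal, diagonal_mul_diagonal, ← diagonal_one]
  congr 1
  ext i
  split_ifs <;> norm_num

theorem det_aMat {p : ℕ} (hp : 2 ≤ p) : (aMat p).det = 1 := by
  rw [aMat_eq_diagonal, det_diagonal,
    Fin.prod_univ_eq_prod_range (fun i => if i < 2 then (-1 : ℚ[X]) else 1)]
  obtain ⟨m, rfl⟩ := Nat.exists_eq_add_of_le' hp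
  simp [Finset.prod_range_succ']

theorem xMat_mul_aMat_pow_self {p : ℕ} (hp : 2 ≤ p) :
    (xMat p * aMat p) ^ p = (X : ℚ[X]) • (1 : Matrix (Fin p) (Fin p) ℚ[X]) := by
  have : NeZero p := ⟨by omega⟩
  have hweights :
      ∏ j : Fin p, (if j = 0 then X else 1) * (if (j : ℕ) < 2 then -1 else 1) = (X : ℚ[X]) := by
    rw [Finset.prod_mul_distrib, Finset.prod_ite_eq', ← det_diagonal, ← aMat_eq_diagonal,
      det_aMat hp, if_pos (Finset.mem_univ _), mul_one]
  rw [xMat_eq_weightedCyclicShift, aMat_eq_diagonal, weightedCyclicShift_mul_diagonal,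
    weightedCyclicShift_pow_self]
  simp only [Pi.mul_apply, hweights]

theorem aMat_two : aMat 2 = -1 := by
  ext i j
  fin_cases i <;> fin_cases j <;> simp [aMat]

/-- With `x` the `t`-companion matrix, `a = diag(-1,-1,1,…,1)` and `y = a·x·a`,
one has `(x·a)^p = t·I_p`, and consequently
`(x·y)^{(p-1)/2}·x = y·(x·y)^{(p-1)/2}`. -/
theorem stmt_11 (p : ℕ) (hp : p.Prime) :
    (xMat p * aMat p) ^ p = (X : ℚ[X]) • (1 : Matrix (Fin p) (Fin p) ℚ[X]) ∧
    (xMat p * (aMat p * xMat p * aMat p)) ^ ((p - 1) / 2) * xMat p =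
      (aMat p * xMat p * aMat p) *
        (xMat p * (aMat p * xMat p * aMat p)) ^ ((p - 1) / 2) := by
  have hpow := xMat_mul_aMat_pow_self hp.two_le
  refine ⟨hpow, mul_conj_pow_mul_eq_conj_mul_pow (aMat_mul_self p) _ ?_⟩
  rcases hp.eq_two_or_odd' with rfl | hodd
  · rw [aMat_two]
    exact Commute.neg_one_left _
  · rw [show 2 * ((p - 1) / 2) + 1 = p by obtain ⟨m, rfl⟩ := hodd; omega, hpow]
    exact (Commute.one_right _).smul_right _
end

section
/- With x, y, a the p×p matrices as above (x the t-companion matrix, a = diag(-1,-1,1,...,1), y = a·x·a), for every natural number i one has (xy)^{ip} = t^{2i}·I_p = (yx)^{ip}. -/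
open Polynomial Matrix

lemma xpow (p : ℕ) (hp : 0 < p) : ∀ k, k ≤ p →
    (xMat p) ^ k = Matrix.of (fun i j : Fin p =>
      if (i : ℕ) + k = (j : ℕ) then 1
      else if (i : ℕ) + k = p + (j : ℕ) then X else 0) := by
  intro k
  induction k with
  | zero =>
    intro _
    refine Matrix.ext fun i j => ?_
    simp only [pow_zero, Matrix.one_apply, Matrix.of_apply]
    have hi := i.isLt; have hj := j.isLt
    rcases eq_or_ne i j with h | h
    · simp [h]
    · have : (i:ℕ) ≠ (j:ℕ) := fun hc => h (Fin.ext hc)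
      rw [if_neg h, if_neg (by omega), if_neg (by omega)]
  | succ k ih =>
    intro hk
    have hk' : k ≤ p := Nat.le_of_succ_le hk
    rw [pow_succ, ih hk']
    refine Matrix.ext fun i j => ?_
    rw [Matrix.mul_apply]
    have hi := i.isLt; have hj := j.isLt
    simp only [Matrix.of_apply, xMat]
    rcases Nat.eq_zero_or_pos (j : ℕ) with hj0 | hj0
    · have hlt : p - 1 < p := by omega
      have hz : ∀ l : Fin p, l ≠ (⟨p - 1, hlt⟩ : Fin p) →
          (if (i:ℕ) + k = (l:ℕ) then (1:ℚ[X]) else if (i:ℕ) + k = p + (l:ℕ) then X else 0) *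
            (if (l:ℕ) + 1 = (j:ℕ) then 1 else if (l:ℕ) = p - 1 ∧ (j:ℕ) = 0 then X else 0) = 0 := by
        intro l hl
        have hlv : (l : ℕ) ≠ p - 1 := fun hc => hl (Fin.ext hc)
        have h1 : ¬((l:ℕ) + 1 = (j:ℕ)) := by omega
        have h2 : ¬((l:ℕ) = p - 1 ∧ (j:ℕ) = 0) := fun hc => hlv hc.1
        rw [if_neg h1, if_neg h2, mul_zero]
      rw [Fintype.sum_eq_single _ hz]
      have hv : ((⟨p - 1, hlt⟩ : Fin p) : ℕ) = p - 1 := rfl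
      rw [hv]
      split_ifs with h1 h2 h3 h4 h5 h6 h7 h8 h9 h10
      all_goals try rfl
      all_goals try ring
      all_goals try (exfalso; omega)
    · have hlt : (j:ℕ) - 1 < p := by omega
      have hz : ∀ l : Fin p, l ≠ (⟨(j:ℕ) - 1, hlt⟩ : Fin p) →
          (if (i:ℕ) + k = (l:ℕ) then (1:ℚ[X]) else if (i:ℕ) + k = p + (l:ℕ) then X else 0) *
            (if (l:ℕ) + 1 = (j:ℕ) then 1 else if (l:ℕ) = p - 1 ∧ (j:ℕ) = 0 then X else 0) = 0 := by
        intro l hl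
        have hlv : (l : ℕ) ≠ (j:ℕ) - 1 := fun hc => hl (Fin.ext hc)
        have h1 : ¬((l:ℕ) + 1 = (j:ℕ)) := by omega
        have h2 : ¬((l:ℕ) = p - 1 ∧ (j:ℕ) = 0) := fun hc => by omega
        rw [if_neg h1, if_neg h2, mul_zero]
      rw [Fintype.sum_eq_single _ hz]
      have hv : ((⟨(j:ℕ) - 1, hlt⟩ : Fin p) : ℕ) = (j:ℕ) - 1 := rfl
      rw [hv]
      split_ifs with h1 h2 h3 h4 h5 h6 h7 h8 h9 h10
      all_goals try rfl
      all_goals try ring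
      all_goals try (exfalso; omega)

noncomputable def eDiag (p : ℕ) : Matrix (Fin p) (Fin p) ℚ[X] :=
  Matrix.diagonal fun i => if (i : ℕ) = 0 then 1 else -1

noncomputable def fDiag (p : ℕ) : Matrix (Fin p) (Fin p) ℚ[X] :=
  Matrix.diagonal fun i => if (i : ℕ) = 1 then -1 else 1

lemma eDiag_sq (p : ℕ) : eDiag p * eDiag p = 1 := by
  rw [eDiag, Matrix.diagonal_mul_diagonal]
  have h : (fun i : Fin p => (if (i:ℕ) = 0 then (1:ℚ[X]) else -1) * (if (i:ℕ) = 0 then 1 else -1))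
      = fun _ => (1:ℚ[X]) := funext fun i => by split_ifs <;> ring
  rw [h, Matrix.diagonal_one]

lemma fDiag_sq (p : ℕ) : fDiag p * fDiag p = 1 := by
  rw [fDiag, Matrix.diagonal_mul_diagonal]
  have h : (fun i : Fin p => (if (i:ℕ) = 1 then (-1:ℚ[X]) else 1) * (if (i:ℕ) = 1 then -1 else 1))
      = fun _ => (1:ℚ[X]) := funext fun i => by split_ifs <;> ring
  rw [h, Matrix.diagonal_one]

lemma aMat_diag (p : ℕ) : aMat p =
    Matrix.diagonal fun i : Fin p => if (i : ℕ) < 2 then (-1 : ℚ[X]) else 1 := by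
  refine Matrix.ext fun i j => ?_
  simp only [aMat, Matrix.of_apply, Matrix.diagonal_apply]

lemma conj_e (p : ℕ) (hp : 2 ≤ p) :
    xMat p * aMat p = eDiag p * xMat p * eDiag p := by
  rw [aMat_diag, eDiag]
  refine Matrix.ext fun i j => ?_
  rw [Matrix.mul_diagonal, Matrix.mul_diagonal, Matrix.diagonal_mul]
  simp only [xMat, Matrix.of_apply]
  have hi := i.isLt; have hj := j.isLt
  split_ifs with h1 h2 h3 h4 h5 h6 h7 h8 h9 h10
  all_goals try ring
  all_goals try (exfalso; omega)

lemma conj_f (p : ℕ) (hp : 2 ≤ p) :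
    aMat p * xMat p = fDiag p * xMat p * fDiag p := by
  rw [aMat_diag, fDiag]
  refine Matrix.ext fun i j => ?_
  rw [Matrix.diagonal_mul, Matrix.mul_diagonal, Matrix.diagonal_mul]
  simp only [xMat, Matrix.of_apply]
  have hi := i.isLt; have hj := j.isLt
  split_ifs with h1 h2 h3 h4 h5 h6 h7 h8 h9 h10
  all_goals try ring
  all_goals try (exfalso; omega)

lemma xMat_pow_p (p : ℕ) (hp : 0 < p) : (xMat p) ^ p = (X : ℚ[X]) • (1 : Matrix (Fin p) (Fin p) ℚ[X]) := by
  rw [xpow p hp p le_rfl]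
  refine Matrix.ext fun i j => ?_
  rw [Matrix.smul_apply, Matrix.one_apply, Matrix.of_apply]
  have hi := i.isLt; have hj := j.isLt
  rcases eq_or_ne i j with h | h
  · rw [if_pos h, if_neg (by omega), if_pos (by omega), smul_eq_mul, mul_one]
  · have : (i:ℕ) ≠ (j:ℕ) := fun hc => h (Fin.ext hc)
    rw [if_neg h, if_neg (by omega), if_neg (by omega), smul_zero]

lemma conjPow {n : ℕ} (e x : Matrix (Fin n) (Fin n) ℚ[X]) (he : e * e = 1) (m : ℕ) :
    (e * x * e) ^ m = e * x ^ m * e := by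
  induction m with
  | zero => rw [pow_zero, pow_zero, mul_one, he]
  | succ m ih =>
    rw [pow_succ, ih, pow_succ]
    calc e * x ^ m * e * (e * x * e) = e * x ^ m * (e * e) * x * e := by
          simp only [mul_assoc]
      _ = e * (x ^ m * x) * e := by rw [he, mul_one]; simp only [mul_assoc]

lemma key {n : ℕ} (e x : Matrix (Fin n) (Fin n) ℚ[X]) (he : e * e = 1)
    (hx : x ^ n = (X : ℚ[X]) • 1) (i : ℕ) :
    (e * x * e) ^ (2 * (i * n)) = ((X : ℚ[X]) ^ (2 * i)) • 1 := by
  rw [conjPow e x he, show 2 * (i * n) = n * (2 * i) by ring, pow_mul, hx,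
    _root_.smul_pow, one_pow, Matrix.mul_smul, Matrix.smul_mul, mul_one, he]

/-- With `x` the `t`-companion matrix, `a = diag(-1,-1,1,…,1)` and `y = a·x·a`,
for every natural number `i`, `(xy)^{ip} = t^{2i}·I_p = (yx)^{ip}`. -/
theorem stmt_12 (p : ℕ) (hp : p.Prime) (i : ℕ) :
    (xMat p * (aMat p * xMat p * aMat p)) ^ (i * p) =
        ((X : ℚ[X]) ^ (2 * i)) • (1 : Matrix (Fin p) (Fin p) ℚ[X]) ∧
    ((aMat p * xMat p * aMat p) * xMat p) ^ (i * p) =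
        ((X : ℚ[X]) ^ (2 * i)) • (1 : Matrix (Fin p) (Fin p) ℚ[X]) := by
  have h2 : 2 ≤ p := hp.two_le
  have h0 : 0 < p := by omega
  have hxp := xMat_pow_p p h0
  constructor
  · have h1 : xMat p * (aMat p * xMat p * aMat p) = (xMat p * aMat p) ^ 2 := by
      rw [sq]; simp only [mul_assoc]
    rw [h1, ← pow_mul, conj_e p h2]
    exact key _ _ (eDiag_sq p) hxp i
  · have h1 : (aMat p * xMat p * aMat p) * xMat p = (aMat p * xMat p) ^ 2 := by
      rw [sq]; simp only [mul_assoc]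
    rw [h1, ← pow_mul, conj_f p h2]
    exact key _ _ (fDiag_sq p) hxp i
end

section
/- Let x, y be p×p matrices over the field ℚ(t) such that x and y are invertible, 1 - x·y is invertible, and det(1-x) = det(1-y). For k ∈ ℕ define C_k = 1 + (y-1)·x·∑_{i=0}^{k-1}(yx)^i and E_k = 1 + (x-1)·y·∑_{i=0}^{k-1}(xy)^i. If additionally (xy)^k·x = y·(xy)^k, then E_k·(1-xy) = (1+y(xy)^k)·(1-y), C_k·(1-yx) = (1+y(xy)^k)·(1-x), and det(C_k) = det(E_k). -/
open Matrix

/-- Let `x, y` be `p×p` matrices over `ℚ(t)` with `x`, `y`, `1 - xy` invertible,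
`det(1-x) = det(1-y)`, and `(xy)^k·x = y·(xy)^k`.  With
`C_k = 1 + (y-1)x∑_{i<k}(yx)^i` and `E_k = 1 + (x-1)y∑_{i<k}(xy)^i`, one has
`E_k(1-xy) = (1+y(xy)^k)(1-y)`, `C_k(1-yx) = (1+y(xy)^k)(1-x)`, and
`det C_k = det E_k`. -/
theorem stmt_13 (p k : ℕ) (x y : Matrix (Fin p) (Fin p) (RatFunc ℚ))
    (hx : IsUnit x) (hy : IsUnit y) (hxy : IsUnit (1 - x * y))
    (hdet : (1 - x).det = (1 - y).det)
    (hcomm : (x * y) ^ k * x = y * (x * y) ^ k) :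
    (1 + (x - 1) * y * ∑ i ∈ Finset.range k, (x * y) ^ i) * (1 - x * y) =
        (1 + y * (x * y) ^ k) * (1 - y) ∧
    (1 + (y - 1) * x * ∑ i ∈ Finset.range k, (y * x) ^ i) * (1 - y * x) =
        (1 + y * (x * y) ^ k) * (1 - x) ∧
    (1 + (y - 1) * x * ∑ i ∈ Finset.range k, (y * x) ^ i).det =
        (1 + (x - 1) * y * ∑ i ∈ Finset.range k, (x * y) ^ i).det := by
  have hgeo : ∀ a : Matrix (Fin p) (Fin p) (RatFunc ℚ),
      (∑ i ∈ Finset.range k, a ^ i) * (1 - a) = 1 - a ^ k := by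
    intro a
    have h := geom_sum_mul a k
    have h2 : (∑ i ∈ Finset.range k, a ^ i) * (1 - a)
        = -((∑ i ∈ Finset.range k, a ^ i) * (a - 1)) := by noncomm_ring
    rw [h2, h, neg_sub]
  have hshift : x * (y * x) ^ k = (x * y) ^ k * x := by
    have : SemiconjBy x (y * x) (x * y) := by
      unfold SemiconjBy; rw [mul_assoc]
    exact (this.pow_right k)
  have hkey : x * y * (x * y) ^ k = y * (x * y) ^ k * y := by
    calc x * y * (x * y) ^ k = (x * y) ^ k * (x * y) := by
          rw [← pow_succ', pow_succ]
      _ = (x * y) ^ k * x * y := by rw [mul_assoc]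
      _ = y * (x * y) ^ k * y := by rw [hcomm]
  have e1 : (1 + (x - 1) * y * ∑ i ∈ Finset.range k, (x * y) ^ i) * (1 - x * y) =
      (1 + y * (x * y) ^ k) * (1 - y) := by
    calc (1 + (x - 1) * y * ∑ i ∈ Finset.range k, (x * y) ^ i) * (1 - x * y)
        = 1 * (1 - x * y) + (x - 1) * y
            * ((∑ i ∈ Finset.range k, (x * y) ^ i) * (1 - x * y)) := by
          rw [add_mul, mul_assoc]
      _ = 1 * (1 - x * y) + (x - 1) * y * (1 - (x * y) ^ k) := by rw [hgeo]
      _ = 1 - y + y * (x * y) ^ k - x * y * (x * y) ^ k := by noncomm_ring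
      _ = 1 - y + y * (x * y) ^ k - y * (x * y) ^ k * y := by rw [hkey]
      _ = (1 + y * (x * y) ^ k) * (1 - y) := by noncomm_ring
  have hxk : x * (y * x) ^ k = y * (x * y) ^ k := by rw [hshift, hcomm]
  have hyxk : y * x * (y * x) ^ k = y * (x * y) ^ k * x := by
    rw [mul_assoc, hshift, ← mul_assoc]
  have e2 : (1 + (y - 1) * x * ∑ i ∈ Finset.range k, (y * x) ^ i) * (1 - y * x) =
      (1 + y * (x * y) ^ k) * (1 - x) := by
    calc (1 + (y - 1) * x * ∑ i ∈ Finset.range k, (y * x) ^ i) * (1 - y * x)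
        = 1 * (1 - y * x) + (y - 1) * x
            * ((∑ i ∈ Finset.range k, (y * x) ^ i) * (1 - y * x)) := by
          rw [add_mul, mul_assoc]
      _ = 1 * (1 - y * x) + (y - 1) * x * (1 - (y * x) ^ k) := by rw [hgeo]
      _ = 1 - x + x * (y * x) ^ k - y * x * (y * x) ^ k := by noncomm_ring
      _ = 1 - x + y * (x * y) ^ k - y * (x * y) ^ k * x := by rw [hxk, hyxk]
      _ = (1 + y * (x * y) ^ k) * (1 - x) := by noncomm_ring
  refine ⟨e1, e2, ?_⟩
  have hdet_comm : (1 - y * x).det = (1 - x * y).det := by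
    have h1 : (1 : Matrix (Fin p) (Fin p) (RatFunc ℚ)) - y * x = 1 + (-y) * x := by
      noncomm_ring
    have h2 : (1 : Matrix (Fin p) (Fin p) (RatFunc ℚ)) - x * y = 1 + x * (-y) := by
      noncomm_ring
    rw [h1, h2, Matrix.det_one_add_mul_comm]
  have hne : (1 - x * y).det ≠ 0 := (hxy.map (Matrix.detMonoidHom)).ne_zero
  apply mul_right_cancel₀ hne
  have d1 := congrArg Matrix.det e1
  have d2 := congrArg Matrix.det e2
  rw [Matrix.det_mul, Matrix.det_mul] at d1 d2
  rw [hdet_comm] at d2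
  rw [d1, d2, hdet]
end

section
/- Let p ≥ 3 be prime, b ≥ 1, and 0 < a < p-1, excluding the case p = 5, (a,b) = (1,1). Set f_b(t) = 2∑_{i=0}^{2b} t^i + t^b and g(t) = (4a-6)∑_{i=0}^{2b}(-t)^i + (-t)^b - 4(p-4)·t·(∑_{i=0}^{b-1}(-t)^i)². Then g(t) is not a scalar multiple of f_b(t) in ℚ[t]. -/
open Polynomial

/-- For a prime `p ≥ 3`, `b ≥ 1` and `0 < a < p-1`, excluding the case
`(p, a, b) = (5, 1, 1)` (i.e. `n = 3`, `p = 5`), the polynomial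
`g(t) = (4a-6)∑_{i=0}^{2b}(-t)^i + (-t)^b - 4(p-4)t(∑_{i=0}^{b-1}(-t)^i)²` is not
a scalar multiple of `f_b(t) = 2∑_{i=0}^{2b} t^i + t^b` in `ℚ[t]`. -/
theorem stmt_17 (p a b : ℕ) (hp : p.Prime) (hp3 : 3 ≤ p) (hb : 1 ≤ b)
    (ha0 : 0 < a) (ha1 : a < p - 1) (hexc : ¬(p = 5 ∧ a = 1 ∧ b = 1)) :
    ¬ ∃ c : ℚ,
      (C (4 * (a : ℚ) - 6) * ∑ i ∈ Finset.range (2 * b + 1), (-X) ^ i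
          + (-X) ^ b - C (4 * ((p : ℚ) - 4)) * X *
            (∑ i ∈ Finset.range b, (-X) ^ i) ^ 2) =
        C c * (2 * ∑ i ∈ Finset.range (2 * b + 1), (X : ℚ[X]) ^ i + X ^ b) := by
  rintro ⟨c, h⟩
  rcases Nat.lt_or_ge b 3 with hb3 | hb3
  · -- small cases b = 1, b = 2
    interval_cases b
    · -- b = 1
      have v0 := congrArg (eval 0) h
      have v1 := congrArg (eval 1) h
      have v2 := congrArg (eval (-1)) h
      simp [Finset.sum_range_succ, eval_pow] at v0 v1 v2
      have key : 2*(p:ℚ) + 5*a = 15 := by linarith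
      have key2 : 2*p + 5*a = 15 := by exact_mod_cast key
      have hpa : p = 5 ∧ a = 1 := by omega
      exact hexc ⟨hpa.1, hpa.2, rfl⟩
    · -- b = 2
      have v0 := congrArg (eval 0) h
      have v1 := congrArg (eval 1) h
      simp [Finset.sum_range_succ, eval_pow] at v0 v1
      have key : (36:ℚ)*a = 56 := by linarith
      have key2 : 36*a = 56 := by exact_mod_cast key
      omega
  · -- general case b ≥ 3
    set m : ℚ := 4 * (a : ℚ) - 6 with hm
    set q : ℚ := 4 * ((p : ℚ) - 4) with hq
    obtain ⟨e, hpe, he⟩ : ∃ e : ℚ, ((-X : ℚ[X])) ^ b = C e * X ^ b ∧ e * e = 1 := by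
      rcases Nat.even_or_odd b with hpar | hpar
      · exact ⟨1, by simp [hpar.neg_pow], by ring⟩
      · exact ⟨-1, by simp [hpar.neg_pow], by ring⟩
    have heC : (C e : ℚ[X]) * C e = 1 := by rw [← C_mul, he, C_1]
    have hodd : ((-X : ℚ[X])) ^ (2 * b + 1) = -X ^ (2 * b + 1) := Odd.neg_pow ⟨b, by ring⟩ _
    have hT : (∑ i ∈ Finset.range (2 * b + 1), (-X : ℚ[X]) ^ i) * (X + 1)
        = X ^ (2 * b + 1) + 1 := by
      have h1 := geom_sum_mul (-X : ℚ[X]) (2 * b + 1)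
      rw [hodd] at h1
      linear_combination -h1
    have hS : (∑ i ∈ Finset.range b, (-X : ℚ[X]) ^ i) * (X + 1) = 1 - C e * X ^ b := by
      have h1 := geom_sum_mul (-X : ℚ[X]) b
      rw [hpe] at h1
      linear_combination -h1
    have hU : (∑ i ∈ Finset.range (2 * b + 1), (X : ℚ[X]) ^ i) * (X - 1)
        = X ^ (2 * b + 1) - 1 := geom_sum_mul X (2 * b + 1)
    have key :
        C m * X ^ (2*b+3) + C (-m) * X ^ (2*b+1) + C m * X ^ 2 + C (-m) * X ^ 0
        + C e * X ^ (b+3) + C e * X ^ (b+2) + C (-e) * X ^ (b+1) + C (-e) * X ^ b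
        + C (-q) * X ^ 2 + C q * X ^ 1 + C (2*q*e) * X ^ (b+2) + C (-(2*q*e)) * X ^ (b+1)
        + C (-q) * X ^ (2*b+2) + C q * X ^ (2*b+1)
        = C (2*c) * X ^ (2*b+3) + C (4*c) * X ^ (2*b+2) + C (2*c) * X ^ (2*b+1)
        + C (-(2*c)) * X ^ 2 + C (-(4*c)) * X ^ 1 + C (-(2*c)) * X ^ 0
        + C c * X ^ (b+3) + C c * X ^ (b+2) + C (-c) * X ^ (b+1) + C (-c) * X ^ b := by
      simp only [map_neg, map_mul, map_add, map_sub, map_ofNat, C_1]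
      linear_combination ((X+1)^2*(X-1)) * h - C m * (X^2-1) * hT
        - ((X+1)^2*(X-1)) * hpe
        + C q * X * (X-1) * ((∑ i ∈ Finset.range b, (-X : ℚ[X]) ^ i) * (X+1) + 1 - C e * X ^ b) * hS
        + C q * X * (X-1) * X^b * X^b * heC
        + 2 * C c * (X+1)^2 * hU
    have e1 := congrArg (fun f : ℚ[X] => f.coeff (2*b+3)) key
    simp only [coeff_add, coeff_C_mul, coeff_X_pow] at e1
    simp [show ¬(2*b+1 = 2*b+3) from by omega, show ¬(2 = 2*b+3) from by omega,
      show ¬(0 = 2*b+3) from by omega, show ¬(b+3 = 2*b+3) from by omega,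
      show ¬(b+2 = 2*b+3) from by omega, show ¬(b+1 = 2*b+3) from by omega,
      show ¬(b = 2*b+3) from by omega, show ¬(1 = 2*b+3) from by omega,
      show ¬(2*b+2 = 2*b+3) from by omega] at e1
    have e2 := congrArg (fun f : ℚ[X] => f.coeff (2*b+2)) key
    simp only [coeff_add, coeff_C_mul, coeff_X_pow] at e2
    simp [show ¬(2*b+3 = 2*b+2) from by omega, show ¬(2*b+1 = 2*b+2) from by omega,
      show ¬(2 = 2*b+2) from by omega, show ¬(0 = 2*b+2) from by omega,
      show ¬(b+3 = 2*b+2) from by omega, show ¬(b+2 = 2*b+2) from by omega,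
      show ¬(b+1 = 2*b+2) from by omega, show ¬(b = 2*b+2) from by omega,
      show ¬(1 = 2*b+2) from by omega] at e2
    have e3 := congrArg (fun f : ℚ[X] => f.coeff (2*b+1)) key
    simp only [coeff_add, coeff_C_mul, coeff_X_pow] at e3
    simp [show ¬(2*b+3 = 2*b+1) from by omega, show ¬(2*b+2 = 2*b+1) from by omega,
      show ¬(2 = 2*b+1) from by omega, show ¬(0 = 2*b+1) from by omega,
      show ¬(b+3 = 2*b+1) from by omega, show ¬(b+2 = 2*b+1) from by omega,
      show ¬(b+1 = 2*b+1) from by omega, show ¬(b = 2*b+1) from by omega,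
      show ¬(1 = 2*b+1) from by omega] at e3
    simp [show ¬(2*b = b) from by omega, show ¬(2*b+1 = b) from by omega,
      show ¬(2*b+2 = b) from by omega, show ¬(2*b+3 = b) from by omega,
      show b ≠ 0 from by omega, show ¬(2*b = b+1) from by omega,
      show ¬(2*b = b+2) from by omega] at e1 e2 e3
    have hm0 : (4:ℚ) * a = 6 := by
      have hmz : m = 0 := by linarith
      rw [hm] at hmz; linarith
    have : 4 * a = 6 := by exact_mod_cast hm0
    omega
end
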